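/- arXiv:2601.12339 — 3 statements merged into one kernel-verified Lean document; each statement's English description precedes it below -/
import Mathlib

section
/- (Negative Pecuniary Externality, Proposition 1.) Let the shadow price of firm i's capital be q_i = Θ · θ · s_i (1 - s_i) / K_i, where Θ > 0 is a constant and s_i is the logit market share. If s_i < 1/2, then for every rival j ≠ i the partial derivative of q_i with respect to K_j (all other arguments fixed) is strictly negative: ∂q_i/∂K_j = Θ (θ²/K_i) (1 - 2 s_i) · (-s_i s_j / K_j) < 0. That is, an increase in a competitor's digital intelligence capital strictly reduces the shadow value of firm i's capital stock. -/
open Real Finset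

/-- Logit market share of firm `i` with capabilities `K`, prices `p`, and
intelligence elasticity `θ`. -/
noncomputable def logitShare {N : ℕ} (θ : ℝ) (K p : Fin N → ℝ) (i : Fin N) : ℝ :=
  K i ^ θ * Real.exp (-(p i)) / ∑ k, K k ^ θ * Real.exp (-(p k))

/-!
Only the denominator `S = ∑ₖ K_k^θ e^{-p_k}` of `s_i` depends on `K_j`, and `∂S/∂K_j = θ S s_j / K_j`,
so `∂s_i/∂K_j = -θ s_i s_j / K_j`. Since `q_i` is proportional to `s_i (1 - s_i)`, the chain rule
multiplies this by `1 - 2 s_i`, which is positive exactly when `s_i < 1/2`.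
-/

section LogitShare

variable {N : ℕ} (θ : ℝ) {K : Fin N → ℝ} (p : Fin N → ℝ)

lemma sum_rpow_mul_exp_pos (hK : ∀ k, 0 < K k) (i : Fin N) :
    0 < ∑ k, K k ^ θ * exp (-(p k)) :=
  Finset.sum_pos (fun k _ => mul_pos (rpow_pos_of_pos (hK k) θ) (exp_pos _)) ⟨i, mem_univ i⟩

lemma logitShare_pos (hK : ∀ k, 0 < K k) (i : Fin N) : 0 < logitShare θ K p i :=
  div_pos (mul_pos (rpow_pos_of_pos (hK i) θ) (exp_pos _)) (sum_rpow_mul_exp_pos θ p hK i)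

lemma sum_update_rpow_mul_exp (j : Fin N) (x : ℝ) :
    ∑ k, Function.update K j x k ^ θ * exp (-(p k)) =
      ∑ k ∈ {j}ᶜ, K k ^ θ * exp (-(p k)) + x ^ θ * exp (-(p j)) := by
  rw [Fintype.sum_eq_add_sum_compl j, Function.update_self, add_comm]
  congr 1
  refine Finset.sum_congr rfl fun k hk => ?_
  rw [Function.update_of_ne (by simpa using hk)]

theorem hasDerivAt_logitShare_update_of_ne (hK : ∀ k, 0 < K k) {i j : Fin N} (hij : j ≠ i) :
    HasDerivAt (fun x => logitShare θ (Function.update K j x) p i)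
      (-(θ * logitShare θ K p i * logitShare θ K p j / K j)) (K j) := by
  set C := ∑ k ∈ {j}ᶜ, K k ^ θ * exp (-(p k))
  have hS : C + K j ^ θ * exp (-(p j)) = ∑ k, K k ^ θ * exp (-(p k)) := by
    rw [← sum_update_rpow_mul_exp, Function.update_eq_self]
  have hshare : (fun x => logitShare θ (Function.update K j x) p i) =
      fun x => K i ^ θ * exp (-(p i)) / (C + x ^ θ * exp (-(p j))) := by
    ext x
    rw [logitShare, sum_update_rpow_mul_exp, Function.update_of_ne hij.symm]
  have hdenom : HasDerivAt (fun x => C + x ^ θ * exp (-(p j)))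
      (θ * K j ^ (θ - 1) * exp (-(p j))) (K j) :=
    ((hasDerivAt_rpow_const (Or.inl (hK j).ne')).mul_const _).const_add C
  have hS0 := sum_rpow_mul_exp_pos θ p hK i
  rw [hshare]
  refine ((hasDerivAt_const (K j) (K i ^ θ * exp (-(p i)))).div hdenom
    (hS ▸ hS0.ne')).congr_deriv ?_
  rw [hS, logitShare, logitShare, rpow_sub_one (hK j).ne']
  field_simp
  ring

end LogitShare

lemma HasDerivAt.mul_one_sub {f : ℝ → ℝ} {f' x : ℝ} (hf : HasDerivAt f f' x) :
    HasDerivAt (fun y => f y * (1 - f y)) ((1 - 2 * f x) * f') x := by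
  refine (hf.mul (hf.const_sub 1)).congr_deriv ?_
  ring

theorem stmt_3_general {N : ℕ} (θ : ℝ) (hθ : 0 < θ) (Θ : ℝ) (hΘ : 0 < Θ)
    (K p : Fin N → ℝ) (hK : ∀ k, 0 < K k) (i j : Fin N) (hij : j ≠ i)
    (hs : logitShare θ K p i < 1 / 2) :
    HasDerivAt
      (fun x => Θ * θ * (logitShare θ (Function.update K j x) p i *
        (1 - logitShare θ (Function.update K j x) p i)) / K i)
      (Θ * (θ ^ 2 / K i) * (1 - 2 * logitShare θ K p i) *
        (-(logitShare θ K p i * logitShare θ K p j) / K j)) (K j) ∧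
    Θ * (θ ^ 2 / K i) * (1 - 2 * logitShare θ K p i) *
        (-(logitShare θ K p i * logitShare θ K p j) / K j) < 0 := by
  constructor
  · have hq := (((hasDerivAt_logitShare_update_of_ne θ p hK hij).mul_one_sub).const_mul
      (Θ * θ)).div_const (K i)
    rw [Function.update_eq_self] at hq
    refine hq.congr_deriv ?_
    ring
  · have hsi := logitShare_pos θ p hK i
    have hsj := logitShare_pos θ p hK j
    have hKi := hK i
    have hmargin : 0 < 1 - 2 * logitShare θ K p i := by linarith
    refine mul_neg_of_pos_of_neg (by positivity) ?_
    exact div_neg_of_neg_of_pos (neg_neg_of_pos (mul_pos hsi hsj)) (hK j)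

/-- Negative Pecuniary Externality (Proposition 1): with shadow price
`q_i = Θ · θ · s_i (1 - s_i) / K_i`, if `s_i < 1/2`, then for every rival `j ≠ i`,
`∂q_i/∂K_j = Θ (θ²/K_i) (1 - 2 s_i) · (-s_i s_j / K_j) < 0`. -/
theorem stmt_3 {N : ℕ} (hN : 2 ≤ N) (θ : ℝ) (hθ : 0 < θ) (Θ : ℝ) (hΘ : 0 < Θ)
    (K p : Fin N → ℝ) (hK : ∀ k, 0 < K k) (i j : Fin N) (hij : j ≠ i)
    (hs : logitShare θ K p i < 1 / 2) :
    HasDerivAt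
      (fun x => Θ * θ * (logitShare θ (Function.update K j x) p i *
        (1 - logitShare θ (Function.update K j x) p i)) / K i)
      (Θ * (θ ^ 2 / K i) * (1 - 2 * logitShare θ K p i) *
        (-(logitShare θ K p i * logitShare θ K p j) / K j)) (K j) ∧
    Θ * (θ ^ 2 / K i) * (1 - 2 * logitShare θ K p i) *
        (-(logitShare θ K p i * logitShare θ K p j) / K j) < 0 :=
  stmt_3_general θ hθ Θ hΘ K p hK i j hij hs
end

section
/- (Capacity-constrained pricing rule.) Fix capabilities K_1,...,K_N > 0, rivals' prices p_{-i}, aggregate token demand Q_total > 0, and parameters c_0 ≥ 0, κ > 0, Q̄ > 0. Let s_i(p) denote firm i's logit share as a function of its own price p, and let π(p) = p · s_i(p) Q_total − C_ops(s_i(p) Q_total), where C_ops(Q) = c_0 Q − κ Q̄ log(1 − Q/Q̄). Then at any price p with Q_i := s_i(p) Q_total ∈ (0, Q̄), the first-order condition π'(p) = 0 holds if and only if p = c_0 + κ/(1 − Q_i/Q̄) + 1/(1 − s_i(p)), i.e. the optimal price decomposes into base cost, congestion premium, and oligopoly markup. -/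
open Real Finset

/-- Operational cost of serving `Q` tokens against physical capacity `Qbar`. -/
noncomputable def Cops (c0 κ Qbar Q : ℝ) : ℝ :=
  c0 * Q - κ * Qbar * Real.log (1 - Q / Qbar)

/-!
Writing `s(y) = a e^{-y} / (a e^{-y} + b)` with `b` the rivals' logit mass gives
`s' = -s (1 - s)`, and the marginal operating cost is `C_ops'(Q) = c₀ + κ / (1 - Q/Q̄)`.
Hence `π'(p) = Q_total · s · (1 - (1 - s)(p - C_ops'(Q_i)))`, which vanishes exactly when the
markup over marginal cost is `1 / (1 - s)`; `N ≥ 2` keeps `s < 1`.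
-/

theorem hasDerivAt_mul_exp_neg_div_add {a b y : ℝ} (h : a * exp (-y) + b ≠ 0) :
    HasDerivAt (fun y => a * exp (-y) / (a * exp (-y) + b))
      (-(a * exp (-y) / (a * exp (-y) + b)) * (1 - a * exp (-y) / (a * exp (-y) + b))) y := by
  have hnum : HasDerivAt (fun y => a * exp (-y)) (-(a * exp (-y))) y := by
    simpa using ((hasDerivAt_neg y).exp).const_mul a
  refine (hnum.fun_div (hnum.add_const b) h).congr_deriv ?_
  field_simp
  ring

theorem logitShare_update_self {N : ℕ} (θ : ℝ) (K p : Fin N → ℝ) (i : Fin N) (y : ℝ) :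
    logitShare θ K (Function.update p i y) i =
      K i ^ θ * exp (-y) / (K i ^ θ * exp (-y) + ∑ k ∈ univ.erase i, K k ^ θ * exp (-p k)) := by
  rw [logitShare, ← add_sum_erase _ _ (mem_univ i)]
  simp only [Function.update_self]
  congr 2
  exact sum_congr rfl fun k hk => by rw [Function.update_of_ne (ne_of_mem_erase hk)]

theorem hasDerivAt_logitShare_update {N : ℕ} (θ : ℝ) {K : Fin N → ℝ} (hK : ∀ k, 0 < K k)
    (p : Fin N → ℝ) (i : Fin N) (y : ℝ) :
    HasDerivAt (fun y => logitShare θ K (Function.update p i y) i)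
      (-logitShare θ K (Function.update p i y) i *
        (1 - logitShare θ K (Function.update p i y) i)) y := by
  simp only [logitShare_update_self]
  apply hasDerivAt_mul_exp_neg_div_add
  have hrivals : 0 ≤ ∑ k ∈ univ.erase i, K k ^ θ * exp (-p k) :=
    sum_nonneg fun k _ => (mul_pos (rpow_pos_of_pos (hK k) θ) (exp_pos _)).le
  exact (add_pos_of_pos_of_nonneg (mul_pos (rpow_pos_of_pos (hK i) θ) (exp_pos _)) hrivals).ne'

theorem logitShare_lt_one {N : ℕ} (hN : 2 ≤ N) (θ : ℝ) {K : Fin N → ℝ} (hK : ∀ k, 0 < K k)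
    (p : Fin N → ℝ) (i : Fin N) : logitShare θ K p i < 1 := by
  have hterm : ∀ k, 0 < K k ^ θ * exp (-p k) := fun k =>
    mul_pos (rpow_pos_of_pos (hK k) θ) (exp_pos _)
  have hothers : (univ.erase i).Nonempty :=
    (univ_nontrivial_iff.2 (Fin.nontrivial_iff_two_le.2 hN)).erase_nonempty
  rw [logitShare, div_lt_one (sum_pos (fun k _ => hterm k) ⟨i, mem_univ i⟩),
    ← add_sum_erase _ _ (mem_univ i)]
  exact lt_add_of_pos_right _ (sum_pos (fun k _ => hterm k) hothers)

theorem hasDerivAt_Cops (c0 κ : ℝ) {Qbar Q : ℝ} (hQbar : Qbar ≠ 0) (hQ : 1 - Q / Qbar ≠ 0) :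
    HasDerivAt (Cops c0 κ Qbar) (c0 + κ / (1 - Q / Qbar)) Q := by
  have hlog : HasDerivAt (fun Q => log (1 - Q / Qbar)) (-(1 / Qbar) / (1 - Q / Qbar)) Q := by
    simpa using (((hasDerivAt_id Q).div_const Qbar).const_sub 1).log hQ
  refine (((hasDerivAt_id Q).const_mul c0).sub (hlog.const_mul (κ * Qbar))).congr_deriv ?_
  field_simp
  ring

theorem hasDerivAt_revenue_sub_Cops {s : ℝ → ℝ} {s' y : ℝ} (hs : HasDerivAt s s' y)
    (Q c0 κ : ℝ) {Qbar : ℝ} (hQbar : Qbar ≠ 0) (hcap : 1 - s y * Q / Qbar ≠ 0) :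
    HasDerivAt (fun y => y * s y * Q - Cops c0 κ Qbar (s y * Q))
      (Q * (s y + s' * (y - (c0 + κ / (1 - s y * Q / Qbar))))) y := by
  have hcost := (hasDerivAt_Cops c0 κ hQbar hcap).comp y (hs.mul_const Q)
  refine ((((hasDerivAt_id y).mul hs).mul_const Q).sub hcost).congr_deriv ?_
  simp only [id_eq]
  ring

theorem logit_foc_iff {σ Q y c : ℝ} (hσQ : σ * Q ≠ 0) (hσ : σ ≠ 1) :
    Q * (σ + -σ * (1 - σ) * (y - c)) = 0 ↔ y = c + 1 / (1 - σ) := by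
  have h1σ : 1 - σ ≠ 0 := sub_ne_zero.2 hσ.symm
  rw [show Q * (σ + -σ * (1 - σ) * (y - c)) = σ * Q * (1 - (1 - σ) * (y - c)) by ring,
    mul_eq_zero, or_iff_right hσQ, sub_eq_zero, eq_comm, ← sub_eq_iff_eq_add', eq_div_iff h1σ,
    mul_comm]

theorem stmt_4_general {N : ℕ} (hN : 2 ≤ N) (θ : ℝ)
    (K p : Fin N → ℝ) (hK : ∀ k, 0 < K k) (i : Fin N)
    (Qtotal c0 κ Qbar : ℝ)
    (s profit : ℝ → ℝ)
    (hsdef : s = fun y => logitShare θ K (Function.update p i y) i)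
    (hprofit : profit = fun y => y * s y * Qtotal - Cops c0 κ Qbar (s y * Qtotal))
    (pr : ℝ) (hQpos : 0 < s pr * Qtotal) (hQlt : s pr * Qtotal < Qbar) :
    deriv profit pr = 0 ↔
      pr = c0 + κ / (1 - s pr * Qtotal / Qbar) + 1 / (1 - s pr) := by
  have hQbar : 0 < Qbar := hQpos.trans hQlt
  have hcap : 1 - s pr * Qtotal / Qbar ≠ 0 := (sub_pos.2 ((div_lt_one hQbar).2 hQlt)).ne'
  have hs : HasDerivAt s (-s pr * (1 - s pr)) pr := by
    subst hsdef
    exact hasDerivAt_logitShare_update θ hK p i pr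
  have hs1 : s pr ≠ 1 := by
    subst hsdef
    exact (logitShare_lt_one hN θ hK _ i).ne
  rw [hprofit, (hasDerivAt_revenue_sub_Cops hs Qtotal c0 κ hQbar.ne' hcap).deriv]
  exact logit_foc_iff hQpos.ne' hs1

/-- Capacity-constrained pricing rule: at any own price `pr` at which firm `i`'s
token demand `Q_i = s_i(pr) Q_total` lies in `(0, Q̄)`, the first-order condition
`π'(pr) = 0` holds iff `pr = c_0 + κ/(1 - Q_i/Q̄) + 1/(1 - s_i(pr))`. -/
theorem stmt_4 {N : ℕ} (hN : 2 ≤ N) (θ : ℝ) (hθ : 0 < θ)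
    (K p : Fin N → ℝ) (hK : ∀ k, 0 < K k) (i : Fin N)
    (Qtotal c0 κ Qbar : ℝ) (hQt : 0 < Qtotal) (hc0 : 0 ≤ c0) (hκ : 0 < κ) (hQbar : 0 < Qbar)
    (s profit : ℝ → ℝ)
    (hsdef : s = fun y => logitShare θ K (Function.update p i y) i)
    (hprofit : profit = fun y => y * s y * Qtotal - Cops c0 κ Qbar (s y * Qtotal))
    (pr : ℝ) (hQpos : 0 < s pr * Qtotal) (hQlt : s pr * Qtotal < Qbar) :
    deriv profit pr = 0 ↔
      pr = c0 + κ / (1 - s pr * Qtotal / Qbar) + 1 / (1 - s pr) :=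
  stmt_4_general hN θ K p hK i Qtotal c0 κ Qbar s profit hsdef hprofit pr hQpos hQlt
end

section
/- (Frontier-pressure component of Red Queen depreciation.) Suppose N ≥ 2 firms charge equal prices, firm i's capability is constant K_i(t) = K > 0, and every rival's capability grows along the frontier, K_j(t) = K e^{g_A t} for j ≠ i, with θ > 0 and g_A > 0. Then firm i's logit market share equals s_i(t) = 1/(1 + (N−1) e^{θ g_A t}); its logarithmic derivative satisfies d/dt [log s_i(t)] = −θ g_A (1 − s_i(t)), which at t = 0 equals −θ g_A (1 − 1/N); and s_i(t) → 0 as t → ∞. -/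
open Real Filter

/-! Writing `c = N - 1` and `r = θ g_A`, the rival term `(K e^{g_A t})^θ = K^θ e^{r t}` shares
the factor `K^θ` with firm `i`'s own term, so `s(t) = 1 / (1 + c e^{r t})`. Then
`log s = -log (1 + c e^{r t})` has derivative `-r c e^{r t} / (1 + c e^{r t}) = -r (1 - s)`,
and `s → 0` because the denominator grows exponentially. -/

lemma rpow_div_rpow_add_mul_mul_exp_rpow {K : ℝ} (hK : 0 < K) (c θ g t : ℝ) :
    K ^ θ / (K ^ θ + c * (K * exp (g * t)) ^ θ) = 1 / (1 + c * exp (θ * g * t)) := by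
  have h_rival : (K * exp (g * t)) ^ θ = K ^ θ * exp (θ * g * t) := by
    rw [mul_rpow hK.le (exp_pos _).le, ← exp_mul]
    ring_nf
  have h_denom :
      K ^ θ + c * (K ^ θ * exp (θ * g * t)) = K ^ θ * (1 + c * exp (θ * g * t)) := by
    ring
  rw [h_rival, h_denom, div_mul_cancel_left₀ (rpow_pos_of_pos hK θ).ne', one_div]

lemma one_add_mul_exp_pos {c : ℝ} (hc : 0 ≤ c) (x : ℝ) : 0 < 1 + c * exp x := by
  positivity

lemma hasDerivAt_log_one_div_one_add_mul_exp {c : ℝ} (hc : 0 ≤ c) (r t : ℝ) :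
    HasDerivAt (fun u => log (1 / (1 + c * exp (r * u))))
      (-r * (1 - 1 / (1 + c * exp (r * t)))) t := by
  have h_exp : HasDerivAt (fun u => exp (r * u)) (exp (r * t) * r) t := by
    simpa using ((hasDerivAt_id t).const_mul r).exp
  have h_fun : (fun u => log (1 / (1 + c * exp (r * u)))) =
      fun u => -log (1 + c * exp (r * u)) := by
    funext u
    rw [one_div, log_inv]
  rw [h_fun]
  have h_denom := (h_exp.const_mul c).const_add 1
  refine (h_denom.log (one_add_mul_exp_pos hc _).ne').fun_neg.congr_deriv ?_
  have h_ne := (one_add_mul_exp_pos hc (r * t)).ne'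
  field_simp
  ring

lemma tendsto_one_div_one_add_mul_exp_atTop {c r : ℝ} (hc : 0 < c) (hr : 0 < r) :
    Tendsto (fun t => 1 / (1 + c * exp (r * t))) atTop (nhds 0) := by
  have h_denom : Tendsto (fun t => 1 + c * exp (r * t)) atTop atTop :=
    tendsto_atTop_add_const_left _ 1 <|
      (tendsto_exp_atTop.comp (tendsto_id.const_mul_atTop hr)).const_mul_atTop hc
  simpa only [one_div, Pi.inv_def] using h_denom.inv_tendsto_atTop

/-- Frontier-pressure component of Red Queen depreciation: with equal prices,
firm `i`'s capability constant at `Kv` and every rival growing as `Kv e^{g_A t}`,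
the logit share is `s_i(t) = 1/(1 + (N-1) e^{θ g_A t})`, its log-derivative is
`-θ g_A (1 - s_i(t))` (equal to `-θ g_A (1 - 1/N)` at `t = 0`), and `s_i(t) → 0`. -/
theorem stmt_7 (N : ℕ) (hN : 2 ≤ N) (θ gA Kv : ℝ) (hθ : 0 < θ) (hgA : 0 < gA)
    (hKv : 0 < Kv) (s : ℝ → ℝ)
    (hs : s = fun t =>
      Kv ^ θ / (Kv ^ θ + ((N : ℝ) - 1) * (Kv * Real.exp (gA * t)) ^ θ)) :
    (∀ t, s t = 1 / (1 + ((N : ℝ) - 1) * Real.exp (θ * gA * t))) ∧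
    (∀ t, HasDerivAt (fun u => Real.log (s u)) (-(θ * gA) * (1 - s t)) t) ∧
    (-(θ * gA) * (1 - s 0) = -(θ * gA) * (1 - 1 / (N : ℝ))) ∧
    Filter.Tendsto s Filter.atTop (nhds 0) := by
  have hc : (0 : ℝ) < (N : ℝ) - 1 := by
    have : (2 : ℝ) ≤ N := by exact_mod_cast hN
    linarith
  have h_share : s = fun t => 1 / (1 + ((N : ℝ) - 1) * exp (θ * gA * t)) := by
    rw [hs]
    exact funext fun t => rpow_div_rpow_add_mul_mul_exp_rpow hKv _ θ gA t
  subst h_share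
  refine ⟨fun t => rfl, hasDerivAt_log_one_div_one_add_mul_exp hc.le (θ * gA), ?_,
    tendsto_one_div_one_add_mul_exp_atTop hc (mul_pos hθ hgA)⟩
  simp
end
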